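/- arXiv:1711.07680 — 4 statements merged into one kernel-verified Lean document; each statement's English description precedes it below -/
import Mathlib

section
/- For natural numbers n, m ≥ 1 it is not the case that for all u ∈ (0,1), (n/(n+1))^{1-u} ≥ (m/(m+1))^u, nor for all u ∈ (0,1), (m/(m+1))^u ≥ (n/(n+1))^{1-u}. Consequently no single pair of uniform distributions from the classes {U(0,1/k) : k odd} and {U(0,1/k) : k even} simultaneously maximizes the u-divergence for every u ∈ (0,1). -/
open Filter Set Topology

/-- As `u → 0⁺`, `b ^ u → 1` while `a ^ (1 - u) → a < 1`. -/
theorem Real.not_forall_rpow_le_rpow_one_sub {a b : ℝ} (ha : a < 1) (hb : 0 < b) :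
    ¬ ∀ u ∈ Ioo (0 : ℝ) 1, b ^ u ≤ a ^ (1 - u) := by
  intro h
  have hb_lim : Tendsto (fun u : ℝ => b ^ u) (𝓝[>] 0) (𝓝 1) := by
    simpa using (Real.continuousAt_const_rpow (b := 0) hb.ne').tendsto.mono_left
      (nhdsWithin_le_nhds (s := Ioi 0))
  have ha_lim : Tendsto (fun u : ℝ => a ^ (1 - u)) (𝓝[>] 0) (𝓝 a) := by
    have hcont : ContinuousAt (fun u : ℝ => a ^ (1 - u)) 0 :=
      (Real.continuousAt_const_rpow' (by norm_num)).comp (continuous_sub_left 1).continuousAt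
    simpa using hcont.tendsto.mono_left nhdsWithin_le_nhds
  obtain ⟨u, hlt, hu⟩ :=
    ((ha_lim.eventually_lt hb_lim ha).and (Ioo_mem_nhdsGT zero_lt_one)).exists
  exact (h u hu).not_gt hlt

theorem Nat.cast_div_cast_add_one_lt_one (n : ℕ) : (n : ℝ) / (n + 1) < 1 :=
  (div_lt_one (by positivity)).2 (lt_add_one _)

/-- For `n, m ≥ 1`, it is neither the case that
`(n/(n+1))^(1-u) ≥ (m/(m+1))^u` for all `u ∈ (0,1)`, nor that
`(m/(m+1))^u ≥ (n/(n+1))^(1-u)` for all `u ∈ (0,1)`.  Hence no single pair of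
uniform distributions from the two classes maximizes the u-divergence for every
`u ∈ (0,1)`: minimax robust single-sample tests need not exist. -/
theorem no_uniform_pair_dominates (n m : ℕ) (hn : 1 ≤ n) (hm : 1 ≤ m) :
    ¬ (∀ u ∈ Set.Ioo (0 : ℝ) 1,
        ((m : ℝ) / (m + 1)) ^ u ≤ ((n : ℝ) / (n + 1)) ^ (1 - u)) ∧
    ¬ (∀ u ∈ Set.Ioo (0 : ℝ) 1,
        ((n : ℝ) / (n + 1)) ^ (1 - u) ≤ ((m : ℝ) / (m + 1)) ^ u) := by
  have hn_pos : (0 : ℝ) < n / (n + 1) := by positivity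
  have hm_pos : (0 : ℝ) < m / (m + 1) := by positivity
  refine ⟨Real.not_forall_rpow_le_rpow_one_sub (Nat.cast_div_cast_add_one_lt_one n) hm_pos,
    fun h => ?_⟩
  -- The substitution `u ↦ 1 - u` exchanges the roles of `n` and `m`.
  refine Real.not_forall_rpow_le_rpow_one_sub (Nat.cast_div_cast_add_one_lt_one m) hn_pos
    fun u ⟨hu₀, hu₁⟩ => ?_
  simpa using h (1 - u) ⟨by linarith, by linarith⟩
end

section
/- The Chernoff exponent equals the optimal rate: −inf_{u∈[0,1]} ln ∫ g1^u g0^{1-u} dμ = I_0(0), where I_0(t) = sup_{u∈ℝ} (tu − ln ∫ (g1/g0)^u g0 dμ). -/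
/-!
Write `Λ u = ∫ (g1/g0)^u g0 dμ = ∫ g1^u g0^(1-u) dμ`; then `Λ 0 = ∫ g0 = 1`.
On `[0,1]` the integrand dominates `min g0 g1`, so `log Λ` is bounded below there.
For `u ∉ (0,1)` Bernoulli's inequality `x^u ≥ 1 + u (x - 1)` integrates, since
`∫ g1 = ∫ g0 = 1`, to `Λ u ≥ 1`. Hence `-log Λ ≤ 0 = -log Λ 0` off `[0,1]`,
and the supremum over `ℝ` is attained on `[0,1]`.
-/

open MeasureTheory Set

namespace Real

lemma rpow_mul_rpow_one_sub_eq_div_rpow_mul {a b : ℝ} (ha : 0 < a) (hb : 0 ≤ b) (u : ℝ) :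
    b ^ u * a ^ (1 - u) = (b / a) ^ u * a := by
  rw [div_rpow hb ha.le, rpow_sub ha, rpow_one]
  have : a ^ u ≠ 0 := (rpow_pos_of_pos ha u).ne'
  field_simp

lemma one_add_mul_sub_one_le_rpow {x u : ℝ} (hx : 0 < x) (hu : u ∉ Ioo 0 1) :
    1 + u * (x - 1) ≤ x ^ u := by
  rcases le_or_gt u 0 with hu0 | hu0
  · calc 1 + u * (x - 1) ≤ 1 + log x * u := by
          nlinarith [log_le_sub_one_of_pos hx]
      _ ≤ x ^ u := by
          rw [rpow_def_of_pos hx]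
          linarith [add_one_le_exp (log x * u)]
  · have hu1 : 1 ≤ u := not_lt.mp fun h => hu ⟨hu0, h⟩
    simpa using one_add_mul_self_le_rpow_one_add (s := x - 1) (by linarith) hu1

lemma min_le_rpow_mul_rpow_one_sub {a b u : ℝ} (ha : 0 ≤ a) (hb : 0 ≤ b)
    (hu : u ∈ Icc 0 1) : min a b ≤ b ^ u * a ^ (1 - u) := by
  have hm : 0 ≤ min a b := le_min ha hb
  calc min a b = min a b ^ u * min a b ^ (1 - u) := by
        rw [← rpow_add' hm (by norm_num), add_sub_cancel, rpow_one]
    _ ≤ b ^ u * a ^ (1 - u) :=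
        mul_le_mul (rpow_le_rpow hm (min_le_right a b) hu.1)
          (rpow_le_rpow hm (min_le_left a b) (sub_nonneg.mpr hu.2))
          (rpow_nonneg hm _) (rpow_nonneg hb _)

end Real

lemma neg_iInf_subtype_eq_iSup_neg {ι : Type*} {L : ι → ℝ} {s : Set ι}
    (hbdd : BddBelow (L '' s)) {a : ι} (ha : a ∈ s) (ha0 : L a ≤ 0)
    (hout : ∀ u ∉ s, 0 ≤ L u) :
    -(⨅ u : s, L u) = ⨆ u, -L u := by
  have : Nonempty s := ⟨⟨a, ha⟩⟩
  have : Nonempty ι := ⟨a⟩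
  rw [image_eq_range] at hbdd
  have hub : ∀ u, -L u ≤ -(⨅ u : s, L u) := by
    intro u
    refine neg_le_neg ?_
    by_cases hu : u ∈ s
    · exact ciInf_le hbdd ⟨u, hu⟩
    · exact (ciInf_le hbdd ⟨a, ha⟩).trans (ha0.trans (hout u hu))
  refine le_antisymm ?_ (ciSup_le hub)
  rw [neg_le]
  exact le_ciInf fun u => neg_le.mp (le_ciSup ⟨_, forall_mem_range.mpr hub⟩ (u : ι))

namespace MeasureTheory

variable {α : Type*} [MeasurableSpace α] {μ : Measure α}

lemma integral_pos_of_pos [NeZero μ] {f : α → ℝ} (hf : ∀ x, 0 < f x)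
    (hfi : Integrable f μ) : 0 < ∫ x, f x ∂μ := by
  rw [integral_pos_iff_support_of_nonneg (fun x => (hf x).le) hfi,
    Function.support_eq_univ fun x => (hf x).ne']
  exact Measure.measure_univ_pos.mpr (NeZero.ne μ)

variable {g0 g1 : α → ℝ}

lemma integral_min_le_integral_div_rpow_mul (hg0 : ∀ y, 0 < g0 y) (hg1 : ∀ y, 0 ≤ g1 y)
    (hg0i : Integrable g0 μ) (hg1i : Integrable g1 μ) {u : ℝ} (hu : u ∈ Icc 0 1)
    (hi : Integrable (fun y => (g1 y / g0 y) ^ u * g0 y) μ) :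
    ∫ y, min (g0 y) (g1 y) ∂μ ≤ ∫ y, (g1 y / g0 y) ^ u * g0 y ∂μ := by
  refine integral_mono (hg0i.inf hg1i) hi fun y => ?_
  rw [← Real.rpow_mul_rpow_one_sub_eq_div_rpow_mul (hg0 y) (hg1 y)]
  exact Real.min_le_rpow_mul_rpow_one_sub (hg0 y).le (hg1 y) hu

lemma one_le_integral_div_rpow_mul (hg0 : ∀ y, 0 < g0 y) (hg1 : ∀ y, 0 < g1 y)
    (hg0int : ∫ y, g0 y ∂μ = 1) (hg1int : ∫ y, g1 y ∂μ = 1) {u : ℝ} (hu : u ∉ Ioo 0 1)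
    (hi : Integrable (fun y => (g1 y / g0 y) ^ u * g0 y) μ) :
    1 ≤ ∫ y, (g1 y / g0 y) ^ u * g0 y ∂μ := by
  have hg0i : Integrable g0 μ := .of_integral_ne_zero (by simp [hg0int])
  have hg1i : Integrable g1 μ := .of_integral_ne_zero (by simp [hg1int])
  have hbernoulli : ∀ y, g0 y + u * (g1 y - g0 y) ≤ (g1 y / g0 y) ^ u * g0 y := fun y => by
    have h := mul_le_mul_of_nonneg_right
      (Real.one_add_mul_sub_one_le_rpow (div_pos (hg1 y) (hg0 y)) hu) (hg0 y).le
    rwa [add_mul, one_mul, mul_assoc, sub_mul, div_mul_cancel₀ _ (hg0 y).ne', one_mul] at h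
  have hlin : Integrable (fun y => u * (g1 y - g0 y)) μ := (hg1i.sub hg0i).const_mul u
  calc (1 : ℝ) = ∫ y, (g0 y + u * (g1 y - g0 y)) ∂μ := by
        rw [integral_add hg0i hlin, integral_const_mul, integral_sub hg1i hg0i, hg0int, hg1int]
        ring
    _ ≤ _ := integral_mono (hg0i.add hlin) hi hbernoulli

lemma log_integral_div_rpow_mul_nonneg (hg0 : ∀ y, 0 < g0 y) (hg1 : ∀ y, 0 < g1 y)
    (hg0int : ∫ y, g0 y ∂μ = 1) (hg1int : ∫ y, g1 y ∂μ = 1) {u : ℝ} (hu : u ∉ Ioo 0 1) :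
    0 ≤ Real.log (∫ y, (g1 y / g0 y) ^ u * g0 y ∂μ) := by
  by_cases hi : Integrable (fun y => (g1 y / g0 y) ^ u * g0 y) μ
  · exact Real.log_nonneg (one_le_integral_div_rpow_mul hg0 hg1 hg0int hg1int hu hi)
  · rw [integral_undef hi, Real.log_zero]

end MeasureTheory

theorem chernoff_exponent_eq_rate_at_zero_general {α : Type*} [MeasurableSpace α]
    (μ : Measure α)
    (g0 g1 : α → ℝ)
    (hg0 : ∀ y, 0 < g0 y) (hg1 : ∀ y, 0 < g1 y)
    (hg0int : ∫ y, g0 y ∂μ = 1) (hg1int : ∫ y, g1 y ∂μ = 1)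
    (hint : ∀ u ∈ Set.Icc (0 : ℝ) 1,
      Integrable (fun y => (g1 y / g0 y) ^ u * g0 y) μ) :
    -(⨅ u : Set.Icc (0 : ℝ) 1,
        Real.log (∫ y, g1 y ^ (u : ℝ) * g0 y ^ (1 - (u : ℝ)) ∂μ))
      = ⨆ u : ℝ, ((0 : ℝ) * u - Real.log (∫ y, (g1 y / g0 y) ^ u * g0 y ∂μ)) := by
  have hg0i : Integrable g0 μ := .of_integral_ne_zero (by simp [hg0int])
  have hg1i : Integrable g1 μ := .of_integral_ne_zero (by simp [hg1int])
  have : NeZero μ := ⟨fun h => by simp [h] at hg0int⟩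
  have hmin_pos : 0 < ∫ y, min (g0 y) (g1 y) ∂μ :=
    integral_pos_of_pos (fun y => lt_min (hg0 y) (hg1 y)) (hg0i.inf hg1i)
  simp_rw [Real.rpow_mul_rpow_one_sub_eq_div_rpow_mul (hg0 _) (hg1 _).le, zero_mul, zero_sub]
  refine neg_iInf_subtype_eq_iSup_neg ?_ (left_mem_Icc.mpr zero_le_one) (by simp [hg0int])
    fun u hu => log_integral_div_rpow_mul_nonneg hg0 hg1 hg0int hg1int
      fun h => hu (Ioo_subset_Icc_self h)
  refine ⟨Real.log (∫ y, min (g0 y) (g1 y) ∂μ), ?_⟩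
  rintro _ ⟨u, hu, rfl⟩
  exact Real.log_le_log hmin_pos
    (integral_min_le_integral_div_rpow_mul hg0 (fun y => (hg1 y).le) hg0i hg1i hu (hint u hu))

/-- The Chernoff exponent equals the optimal rate at threshold `0`:
`−inf_{u∈[0,1]} ln ∫ g1^u g0^(1-u) dμ = I_0(0)` with
`I_0(t) = sup_{u∈ℝ} (t u − ln ∫ (g1/g0)^u g0 dμ)`. -/
theorem chernoff_exponent_eq_rate_at_zero {α : Type*} [MeasurableSpace α]
    (μ : Measure α) [SigmaFinite μ]
    (g0 g1 : α → ℝ) (hg0meas : Measurable g0) (hg1meas : Measurable g1)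
    (hg0 : ∀ y, 0 < g0 y) (hg1 : ∀ y, 0 < g1 y)
    (hg0int : ∫ y, g0 y ∂μ = 1) (hg1int : ∫ y, g1 y ∂μ = 1)
    (hint : ∀ u ∈ Set.Icc (0 : ℝ) 1,
      Integrable (fun y => (g1 y / g0 y) ^ u * g0 y) μ) :
    -(⨅ u : Set.Icc (0 : ℝ) 1,
        Real.log (∫ y, g1 y ^ (u : ℝ) * g0 y ^ (1 - (u : ℝ)) ∂μ))
      = ⨆ u : ℝ, ((0 : ℝ) * u - Real.log (∫ y, (g1 y / g0 y) ^ u * g0 y ∂μ)) :=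
  chernoff_exponent_eq_rate_at_zero_general μ g0 g1 hg0 hg1 hg0int hg1int hint
end

section
/- In the band model with only upper bounds (g_j ≤ (1+ε_j) f_j), let ĝ0, ĝ1 be the least favorable densities of Theorem 7 with robust likelihood ratio l̂ clipped to [t_l, t_u]. Then for every threshold t and every G0 ∈ G0^{ε+}, G1 ∈ G1^{ε+}: G0[l̂ < t] ≥ Ĝ0[l̂ < t] and G1[l̂ < t] ≤ Ĝ1[l̂ < t]. -/
open MeasureTheory ENNReal

/-- Upper bounding function of the band model: `g^U = (1+ε) f`. -/
noncomputable def bandUpper {α : Type*} (ε : ℝ≥0∞) (f : α → ℝ≥0∞) : α → ℝ≥0∞ :=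
  fun y => (1 + ε) * f y

/-- Least favorable density under `H0` for the upper-bounded band model:
`ĝ0 = g0U` on `{l ≥ t_l}` and `ĝ0 = g1U / t_l` on `{l < t_l}`, `l = g1U/g0U`. -/
noncomputable def bandLFD0 {α : Type*} (tl : ℝ≥0∞) (g0U g1U : α → ℝ≥0∞) : α → ℝ≥0∞ :=
  fun y => if tl ≤ g1U y / g0U y then g0U y else g1U y / tl

/-- Least favorable density under `H1` for the upper-bounded band model:
`ĝ1 = g1U` on `{l ≤ t_u}` and `ĝ1 = t_u g0U` on `{l > t_u}`, `l = g1U/g0U`. -/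
noncomputable def bandLFD1 {α : Type*} (tu : ℝ≥0∞) (g0U g1U : α → ℝ≥0∞) : α → ℝ≥0∞ :=
  fun y => if g1U y / g0U y ≤ tu then g1U y else tu * g0U y

/-!
With `l = g1U / g0U`, the robust likelihood ratio `l̂ = ĝ1 / ĝ0` is `l` clipped to `[t_l, t_u]`.
For `t ≤ t_l` the event `{l̂ < t}` is empty and for `t > t_u` it is everything, so both
inequalities are trivial there. Otherwise `ĝ1 = g1U ≥ g1` on `{l̂ < t}`, which gives the
bound under `H1`, and `ĝ0 = g0U ≥ g0` on `{l̂ ≥ t}`; since `ĝ0` and `g0` have the same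
total mass, the bound under `H0` follows by passing to complements.
-/

theorem MeasureTheory.setLIntegral_le_of_le_on_compl {α : Type*} [MeasurableSpace α]
    {μ : Measure α} {f g : α → ℝ≥0∞} {A : Set α} (hA : MeasurableSet A)
    (hfg : ∫⁻ y, f y ∂μ = ∫⁻ y, g y ∂μ) (hg : ∫⁻ y, g y ∂μ ≠ ∞)
    (hle : ∀ y ∈ Aᶜ, g y ≤ f y) :
    ∫⁻ y in A, f y ∂μ ≤ ∫⁻ y in A, g y ∂μ := by
  have hgA : ∫⁻ y in Aᶜ, g y ∂μ ≠ ∞ := ne_top_of_le_ne_top hg (setLIntegral_le_lintegral _ _)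
  refine ENNReal.le_of_add_le_add_right hgA ?_
  calc ∫⁻ y in A, f y ∂μ + ∫⁻ y in Aᶜ, g y ∂μ
      ≤ ∫⁻ y in A, f y ∂μ + ∫⁻ y in Aᶜ, f y ∂μ :=
        add_le_add le_rfl (setLIntegral_mono' hA.compl hle)
    _ = ∫⁻ y in A, g y ∂μ + ∫⁻ y in Aᶜ, g y ∂μ := by
      rw [lintegral_add_compl _ hA, lintegral_add_compl _ hA, hfg]

section BandLFD

variable {α : Type*} {tl tu : ℝ≥0∞} {g0U g1U : α → ℝ≥0∞} {y : α}

theorem bandLFD1_div_bandLFD0 (htltu : tl ≤ tu) (h0 : g0U y ≠ 0) (h0' : g0U y ≠ ∞)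
    (h1 : g1U y ≠ 0) (h1' : g1U y ≠ ∞) :
    bandLFD1 tu g0U g1U y / bandLFD0 tl g0U g1U y = max tl (min (g1U y / g0U y) tu) := by
  unfold bandLFD0 bandLFD1
  rcases lt_or_ge (g1U y / g0U y) tl with hlo | hlo
  · rw [if_pos (hlo.le.trans htltu), if_neg hlo.not_ge, ENNReal.div_div_cancel h1 h1',
      min_eq_left (hlo.le.trans htltu), max_eq_left hlo.le]
  rcases le_or_gt (g1U y / g0U y) tu with hhi | hhi
  · rw [if_pos hhi, if_pos hlo, min_eq_left hhi, max_eq_right hlo]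
  · rw [if_neg hhi.not_ge, if_pos hlo, ENNReal.mul_div_cancel_right h0 h0', min_eq_right hhi.le,
      max_eq_right htltu]

theorem bandLFD0_eq_of_lt_max (hlt : tl < max tl (min (g1U y / g0U y) tu)) :
    bandLFD0 tl g0U g1U y = g0U y := by
  simp only [lt_max_iff, lt_irrefl, false_or, lt_min_iff] at hlt
  exact if_pos hlt.1.le

theorem bandLFD1_eq_of_max_lt (hlt : max tl (min (g1U y / g0U y) tu) < tu) :
    bandLFD1 tu g0U g1U y = g1U y := by
  simp only [max_lt_iff, min_lt_iff, lt_irrefl, or_false] at hlt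
  exact if_pos hlt.2.le

variable [MeasurableSpace α]

theorem Measurable.bandLFD0 (h0 : Measurable g0U) (h1 : Measurable g1U) :
    Measurable (bandLFD0 tl g0U g1U) :=
  Measurable.ite (measurableSet_le measurable_const (h1.div h0)) h0 (h1.div measurable_const)

theorem Measurable.bandLFD1 (h0 : Measurable g0U) (h1 : Measurable g1U) :
    Measurable (bandLFD1 tu g0U g1U) :=
  Measurable.ite (measurableSet_le (h1.div h0) measurable_const) h1 (h0.const_mul _)

end BandLFD

theorem bandUpper_ne_zero {α : Type*} {ε : ℝ≥0∞} {f : α → ℝ≥0∞} {y : α} (hf : 0 < f y) :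
    bandUpper ε f y ≠ 0 :=
  mul_ne_zero (by simp) hf.ne'

theorem bandUpper_ne_top {α : Type*} {ε : ℝ≥0∞} {f : α → ℝ≥0∞} {y : α} (hε : ε ≠ ∞)
    (hf : f y ≠ ∞) : bandUpper ε f y ≠ ∞ :=
  mul_ne_top (by finiteness) hf

theorem band_upper_LFDs_minimax_general {α : Type*} [MeasurableSpace α]
    (μ : Measure α)
    (f0 f1 : α → ℝ≥0∞) (hf0meas : Measurable f0) (hf1meas : Measurable f1)
    (hf0pos : ∀ y, 0 < f0 y) (hf1pos : ∀ y, 0 < f1 y)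
    (hf0fin : ∀ y, f0 y ≠ ∞) (hf1fin : ∀ y, f1 y ≠ ∞)
    (ε0 ε1 : ℝ≥0∞) (hε0 : ε0 ≠ ∞) (hε1 : ε1 ≠ ∞)
    (tl tu : ℝ≥0∞) (htltu : tl < tu)
    -- normalization of the least favorable densities
    (hghat0int : ∫⁻ y, bandLFD0 tl (bandUpper ε0 f0) (bandUpper ε1 f1) y ∂μ = 1)
    (hghat1int : ∫⁻ y, bandLFD1 tu (bandUpper ε0 f0) (bandUpper ε1 f1) y ∂μ = 1)
    (g0 g1 : α → ℝ≥0∞)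
    (hg0int : ∫⁻ y, g0 y ∂μ = 1) (hg1int : ∫⁻ y, g1 y ∂μ = 1)
    (hg0ub : ∀ y, g0 y ≤ bandUpper ε0 f0 y) (hg1ub : ∀ y, g1 y ≤ bandUpper ε1 f1 y)
    (t : ℝ≥0∞) :
    (∫⁻ y in {y | bandLFD1 tu (bandUpper ε0 f0) (bandUpper ε1 f1) y
            / bandLFD0 tl (bandUpper ε0 f0) (bandUpper ε1 f1) y < t},
        bandLFD0 tl (bandUpper ε0 f0) (bandUpper ε1 f1) y ∂μ
      ≤ ∫⁻ y in {y | bandLFD1 tu (bandUpper ε0 f0) (bandUpper ε1 f1) y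
            / bandLFD0 tl (bandUpper ε0 f0) (bandUpper ε1 f1) y < t}, g0 y ∂μ) ∧
    (∫⁻ y in {y | bandLFD1 tu (bandUpper ε0 f0) (bandUpper ε1 f1) y
            / bandLFD0 tl (bandUpper ε0 f0) (bandUpper ε1 f1) y < t}, g1 y ∂μ
      ≤ ∫⁻ y in {y | bandLFD1 tu (bandUpper ε0 f0) (bandUpper ε1 f1) y
            / bandLFD0 tl (bandUpper ε0 f0) (bandUpper ε1 f1) y < t},
          bandLFD1 tu (bandUpper ε0 f0) (bandUpper ε1 f1) y ∂μ) := by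
  set g0U := bandUpper ε0 f0
  set g1U := bandUpper ε1 f1
  set A := {y | bandLFD1 tu g0U g1U y / bandLFD0 tl g0U g1U y < t}
  have hclip (y : α) : bandLFD1 tu g0U g1U y / bandLFD0 tl g0U g1U y =
      max tl (min (g1U y / g0U y) tu) :=
    bandLFD1_div_bandLFD0 htltu.le (bandUpper_ne_zero (hf0pos y)) (bandUpper_ne_top hε0 (hf0fin y))
      (bandUpper_ne_zero (hf1pos y)) (bandUpper_ne_top hε1 (hf1fin y))
  have hg0Umeas : Measurable g0U := hf0meas.const_mul _
  have hg1Umeas : Measurable g1U := hf1meas.const_mul _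
  have hA : MeasurableSet A := measurableSet_lt
    ((hg0Umeas.bandLFD1 hg1Umeas).div (hg0Umeas.bandLFD0 hg1Umeas)) measurable_const
  constructor
  · rcases le_or_gt t tl with ht | ht
    · have hA_empty : A = ∅ := Set.eq_empty_of_forall_notMem fun y hy ↦ by
        simp only [A, Set.mem_ofPred_eq, hclip] at hy
        exact (ht.trans (le_max_left _ _)).not_gt hy
      simp [hA_empty]
    · refine setLIntegral_le_of_le_on_compl hA (by rw [hghat0int, hg0int]) (by simp [hg0int]) ?_
      intro y hy
      simp only [A, Set.mem_compl_iff, Set.mem_ofPred_eq, hclip, not_lt] at hy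
      rw [bandLFD0_eq_of_lt_max (ht.trans_le hy)]
      exact hg0ub y
  · rcases le_or_gt t tu with ht | ht
    · refine setLIntegral_mono' hA fun y hy ↦ ?_
      simp only [A, Set.mem_ofPred_eq, hclip] at hy
      rw [bandLFD1_eq_of_max_lt (hy.trans_le ht)]
      exact hg1ub y
    · have hA_univ : A = Set.univ := Set.eq_univ_of_forall fun y ↦ by
        simp only [A, Set.mem_ofPred_eq, hclip]
        exact (max_le htltu.le (min_le_right _ _)).trans_lt ht
      rw [hA_univ, Measure.restrict_univ, hg1int, hghat1int]

/-- In the band model with only upper bounds `g_j ≤ (1+ε_j) f_j`, the least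
favorable densities `ĝ0, ĝ1` (whose likelihood ratio `l̂ = ĝ1/ĝ0` is `l` clipped
to `[t_l, t_u]`) are single-sample minimax robust: for every threshold `t` and
all densities `G0, G1` in the respective classes,
`G0[l̂ < t] ≥ Ĝ0[l̂ < t]` and `G1[l̂ < t] ≤ Ĝ1[l̂ < t]`. -/
theorem band_upper_LFDs_minimax {α : Type*} [MeasurableSpace α]
    (μ : Measure α) [SigmaFinite μ]
    (f0 f1 : α → ℝ≥0∞) (hf0meas : Measurable f0) (hf1meas : Measurable f1)
    (hf0pos : ∀ y, 0 < f0 y) (hf1pos : ∀ y, 0 < f1 y)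
    (hf0fin : ∀ y, f0 y ≠ ∞) (hf1fin : ∀ y, f1 y ≠ ∞)
    (hf0int : ∫⁻ y, f0 y ∂μ = 1) (hf1int : ∫⁻ y, f1 y ∂μ = 1)
    (ε0 ε1 : ℝ≥0∞) (hε0 : ε0 ≠ ∞) (hε1 : ε1 ≠ ∞)
    (tl tu : ℝ≥0∞) (htl : 0 < tl) (htltu : tl < tu) (htu : tu ≠ ∞)
    -- normalization of the least favorable densities
    (hghat0int : ∫⁻ y, bandLFD0 tl (bandUpper ε0 f0) (bandUpper ε1 f1) y ∂μ = 1)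
    (hghat1int : ∫⁻ y, bandLFD1 tu (bandUpper ε0 f0) (bandUpper ε1 f1) y ∂μ = 1)
    (g0 g1 : α → ℝ≥0∞) (hg0meas : Measurable g0) (hg1meas : Measurable g1)
    (hg0int : ∫⁻ y, g0 y ∂μ = 1) (hg1int : ∫⁻ y, g1 y ∂μ = 1)
    (hg0ub : ∀ y, g0 y ≤ bandUpper ε0 f0 y) (hg1ub : ∀ y, g1 y ≤ bandUpper ε1 f1 y)
    (t : ℝ≥0∞) :
    (∫⁻ y in {y | bandLFD1 tu (bandUpper ε0 f0) (bandUpper ε1 f1) y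
            / bandLFD0 tl (bandUpper ε0 f0) (bandUpper ε1 f1) y < t},
        bandLFD0 tl (bandUpper ε0 f0) (bandUpper ε1 f1) y ∂μ
      ≤ ∫⁻ y in {y | bandLFD1 tu (bandUpper ε0 f0) (bandUpper ε1 f1) y
            / bandLFD0 tl (bandUpper ε0 f0) (bandUpper ε1 f1) y < t}, g0 y ∂μ) ∧
    (∫⁻ y in {y | bandLFD1 tu (bandUpper ε0 f0) (bandUpper ε1 f1) y
            / bandLFD0 tl (bandUpper ε0 f0) (bandUpper ε1 f1) y < t}, g1 y ∂μ
      ≤ ∫⁻ y in {y | bandLFD1 tu (bandUpper ε0 f0) (bandUpper ε1 f1) y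
            / bandLFD0 tl (bandUpper ε0 f0) (bandUpper ε1 f1) y < t},
          bandLFD1 tu (bandUpper ε0 f0) (bandUpper ε1 f1) y ∂μ) :=
  band_upper_LFDs_minimax_general μ f0 f1 hf0meas hf1meas hf0pos hf1pos hf0fin hf1fin ε0 ε1 hε0 hε1
    tl tu htltu hghat0int hghat1int g0 g1 hg0int hg1int hg0ub hg1ub t
end

section
/- Suppose the likelihood ratio l̂ = ĝ1/ĝ0 is clipped, i.e. takes values in [t_l, t_u] with 0 < t_l < 1 < t_u. If ∫_{l ≤ t_u} g0^L dμ + (1/t_u) ∫_{l > t_u} g1^L dμ = 1 and ∫_{l ≥ t_l} g1^L dμ + t_l ∫_{l < t_l} g0^L dμ = 1, then the functions ĝ0 = g0^L on {l ≤ t_u}, ĝ0 = (1/t_u) g1^L on {l > t_u}, and ĝ1 = g1^L on {l ≥ t_l}, ĝ1 = t_l g0^L on {l < t_l} are probability densities satisfying ĝ0 ≥ g0^L, ĝ1 ≥ g1^L, and ĝ1/ĝ0 is the clipping of l = g1^L/g0^L to [t_l, t_u]. -/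
open MeasureTheory ENNReal

/-! Splitting each integral along the set on which its `if` is decided turns the two
normalizations into exactly the hypotheses `hnorm0`, `hnorm1`. The remaining claims are
pointwise: on `{l > t_u}` the ratio `l = g1L/g0L` exceeds `t_u`, so `g1L/t_u ≥ g0L`, and
`g1L / (g1L/t_u) = t_u` (symmetrically on `{l < t_l}`), which is the clipping of `l`. -/

namespace ENNReal

variable {a b tl tu : ℝ≥0∞}

theorem le_div_of_lt_div_swap (ha0 : a ≠ 0) (ha : a ≠ ∞) (h : tu < b / a) : a ≤ b / tu := by
  have hb0 : b ≠ 0 := by rintro rfl; simp at h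
  rw [ENNReal.le_div_iff_mul_le (Or.inr hb0) (Or.inl h.ne_top), mul_comm]
  exact ((ENNReal.lt_div_iff_mul_lt (Or.inl ha0) (Or.inl ha)).1 h).le

theorem le_mul_of_div_lt (ha0 : a ≠ 0) (ha : a ≠ ∞) (h : b / a < tl) : b ≤ tl * a :=
  ((ENNReal.div_lt_iff (Or.inl ha0) (Or.inl ha)).1 h).le

theorem ite_div_ite_eq_min_max (ha0 : a ≠ 0) (ha : a ≠ ∞) (hb : b ≠ ∞) (htltu : tl ≤ tu) :
    (if tl ≤ b / a then b else tl * a) / (if b / a ≤ tu then a else b / tu)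
      = min tu (max tl (b / a)) := by
  by_cases hu : b / a ≤ tu
  · by_cases hl : tl ≤ b / a
    · simp [hu, hl]
    · rw [not_le] at hl
      simp only [hu, hl.not_ge, if_true, if_false]
      rw [ENNReal.mul_div_cancel_right ha0 ha, max_eq_left hl.le, min_eq_right htltu]
  · rw [not_le] at hu
    have hb0 : b ≠ 0 := by rintro rfl; simp at hu
    have hl : tl ≤ b / a := htltu.trans hu.le
    simp only [hu.not_ge, hl, if_true, if_false]
    rw [ENNReal.div_div_cancel hb0 hb, max_eq_right hl, min_eq_left hu.le]

end ENNReal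

theorem lintegral_ite_eq_add {α : Type*} [MeasurableSpace α] {μ : Measure α} {p : α → Prop}
    [DecidablePred p] (hp : MeasurableSet {y | p y}) (f g : α → ℝ≥0∞) :
    ∫⁻ y, (if p y then f y else g y) ∂μ
      = ∫⁻ y in {y | p y}, f y ∂μ + ∫⁻ y in {y | ¬ p y}, g y ∂μ :=
  lintegral_piecewise hp f g

theorem band_lower_LFDs_general {α : Type*} [MeasurableSpace α]
    (μ : Measure α)
    (g0L g1L : α → ℝ≥0∞) (hg0meas : Measurable g0L) (hg1meas : Measurable g1L)
    (hg0pos : ∀ y, 0 < g0L y)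
    (hg0fin : ∀ y, g0L y ≠ ∞) (hg1fin : ∀ y, g1L y ≠ ∞)
    (tl tu : ℝ≥0∞) (htl1 : tl < 1) (h1tu : 1 < tu)
    (hnorm0 : ∫⁻ y in {y | g1L y / g0L y ≤ tu}, g0L y ∂μ
        + (1 / tu) * ∫⁻ y in {y | tu < g1L y / g0L y}, g1L y ∂μ = 1)
    (hnorm1 : ∫⁻ y in {y | tl ≤ g1L y / g0L y}, g1L y ∂μ
        + tl * ∫⁻ y in {y | g1L y / g0L y < tl}, g0L y ∂μ = 1) :
    (∫⁻ y, (if g1L y / g0L y ≤ tu then g0L y else g1L y / tu) ∂μ = 1) ∧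
    (∫⁻ y, (if tl ≤ g1L y / g0L y then g1L y else tl * g0L y) ∂μ = 1) ∧
    (∀ y, g0L y ≤ (if g1L y / g0L y ≤ tu then g0L y else g1L y / tu)) ∧
    (∀ y, g1L y ≤ (if tl ≤ g1L y / g0L y then g1L y else tl * g0L y)) ∧
    (∀ y, (if tl ≤ g1L y / g0L y then g1L y else tl * g0L y)
        / (if g1L y / g0L y ≤ tu then g0L y else g1L y / tu)
      = min tu (max tl (g1L y / g0L y))) := by
  have hl : Measurable fun y => g1L y / g0L y := hg1meas.div hg0meas
  have htltu : tl ≤ tu := (htl1.trans h1tu).le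
  refine ⟨?_, ?_, fun y => ?_, fun y => ?_,
    fun y => ite_div_ite_eq_min_max (hg0pos y).ne' (hg0fin y) (hg1fin y) htltu⟩
  · rw [lintegral_ite_eq_add (measurableSet_le hl measurable_const), ← hnorm0]
    simp_rw [not_le, one_div, ← lintegral_const_mul _ hg1meas, ENNReal.div_eq_inv_mul]
  · rw [lintegral_ite_eq_add (measurableSet_le measurable_const hl), ← hnorm1]
    simp_rw [not_le, lintegral_const_mul _ hg0meas]
  · split_ifs with h
    exacts [le_rfl, le_div_of_lt_div_swap (hg0pos y).ne' (hg0fin y) (not_le.1 h)]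
  · split_ifs with h
    exacts [le_rfl, le_mul_of_div_lt (hg0pos y).ne' (hg0fin y) (not_le.1 h)]

/-- In the band model with only lower bounds `g_j^L`, if the two normalization
conditions hold, then the densities `ĝ0 = g0L` on `{l ≤ t_u}`, `ĝ0 = g1L/t_u` on
`{l > t_u}` and `ĝ1 = g1L` on `{l ≥ t_l}`, `ĝ1 = t_l g0L` on `{l < t_l}`
(with `l = g1L/g0L`) are probability densities dominating the lower bounds, and
their likelihood ratio `ĝ1/ĝ0` is `l` clipped to `[t_l, t_u]`. -/
theorem band_lower_LFDs {α : Type*} [MeasurableSpace α]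
    (μ : Measure α) [SigmaFinite μ]
    (g0L g1L : α → ℝ≥0∞) (hg0meas : Measurable g0L) (hg1meas : Measurable g1L)
    (hg0pos : ∀ y, 0 < g0L y) (hg1pos : ∀ y, 0 < g1L y)
    (hg0fin : ∀ y, g0L y ≠ ∞) (hg1fin : ∀ y, g1L y ≠ ∞)
    (hg0int : ∫⁻ y, g0L y ∂μ ≤ 1) (hg1int : ∫⁻ y, g1L y ∂μ ≤ 1)
    (tl tu : ℝ≥0∞) (htl : 0 < tl) (htl1 : tl < 1) (h1tu : 1 < tu) (htu : tu ≠ ∞)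
    (hnorm0 : ∫⁻ y in {y | g1L y / g0L y ≤ tu}, g0L y ∂μ
        + (1 / tu) * ∫⁻ y in {y | tu < g1L y / g0L y}, g1L y ∂μ = 1)
    (hnorm1 : ∫⁻ y in {y | tl ≤ g1L y / g0L y}, g1L y ∂μ
        + tl * ∫⁻ y in {y | g1L y / g0L y < tl}, g0L y ∂μ = 1) :
    (∫⁻ y, (if g1L y / g0L y ≤ tu then g0L y else g1L y / tu) ∂μ = 1) ∧
    (∫⁻ y, (if tl ≤ g1L y / g0L y then g1L y else tl * g0L y) ∂μ = 1) ∧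
    (∀ y, g0L y ≤ (if g1L y / g0L y ≤ tu then g0L y else g1L y / tu)) ∧
    (∀ y, g1L y ≤ (if tl ≤ g1L y / g0L y then g1L y else tl * g0L y)) ∧
    (∀ y, (if tl ≤ g1L y / g0L y then g1L y else tl * g0L y)
        / (if g1L y / g0L y ≤ tu then g0L y else g1L y / tu)
      = min tu (max tl (g1L y / g0L y))) :=
  band_lower_LFDs_general μ g0L g1L hg0meas hg1meas hg0pos hg0fin hg1fin tl tu htl1 h1tu hnorm0
    hnorm1
end
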